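/- arXiv:2207.08383 — 2 statements merged into one kernel-verified Lean document; each statement's English description precedes it below -/
import Mathlib

section
/- With f convex, f(0)=0, f(s)>0 for s>0, and f(1)>0, the maps u ↦ f_m(u)/u and u ↦ f_M(u)/u are nondecreasing on (0,1), where f_m(u) = inf_{0<α<1} f(αu)/f(α) and f_M(u) = sup_{0<α<1} f(αu)/f(α). -/
open Set

noncomputable def fm (f : ℝ → ℝ) (u : ℝ) : ℝ := ⨅ α : Set.Ioo (0:ℝ) 1, f (α * u) / f α
noncomputable def fM (f : ℝ → ℝ) (u : ℝ) : ℝ := ⨆ α : Set.Ioo (0:ℝ) 1, f (α * u) / f α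

lemma slope_mono_aux (f : ℝ → ℝ) (hconv : ConvexOn ℝ (Set.Ici 0) f) (hf0 : f 0 = 0)
    {s t : ℝ} (hs : 0 < s) (hst : s ≤ t) : f s / s ≤ f t / t := by
  have ht : 0 < t := lt_of_lt_of_le hs hst
  have hst1 : s / t ≤ 1 := (div_le_one ht).2 hst
  have hkey := hconv.2 Set.self_mem_Ici
    (show t ∈ Set.Ici 0 from ht.le)
    (show (0:ℝ) ≤ 1 - s / t by linarith)
    (show (0:ℝ) ≤ s / t by positivity) (by ring)
  have heq : (1 - s / t) • (0:ℝ) + (s / t) • t = s := by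
    simp only [smul_eq_mul]; field_simp; ring
  rw [heq, smul_eq_mul, smul_eq_mul, hf0, mul_zero, zero_add] at hkey
  rw [div_le_div_iff₀ hs ht]
  calc f s * t ≤ (s / t * f t) * t := by nlinarith
    _ = f t * s := by field_simp

theorem stmt_6 (f : ℝ → ℝ) (hconv : ConvexOn ℝ (Set.Ici 0) f)
    (hnonneg : ∀ s, 0 ≤ s → 0 ≤ f s)
    (hf0 : f 0 = 0) (hfpos : ∀ s, 0 < s → 0 < f s) (hf1 : 0 < f 1) :
    (∀ u v : ℝ, u ∈ Set.Ioo (0:ℝ) 1 → v ∈ Set.Ioo (0:ℝ) 1 → u ≤ v →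
      fm f u / u ≤ fm f v / v) ∧
    (∀ u v : ℝ, u ∈ Set.Ioo (0:ℝ) 1 → v ∈ Set.Ioo (0:ℝ) 1 → u ≤ v →
      fM f u / u ≤ fM f v / v) := by
  have hne : Nonempty (Set.Ioo (0:ℝ) 1) := ⟨⟨1/2, by norm_num⟩⟩
  -- per-term monotonicity (cross-multiplied form)
  have key : ∀ (α : Set.Ioo (0:ℝ) 1) (u v : ℝ), u ∈ Set.Ioo (0:ℝ) 1 →
      v ∈ Set.Ioo (0:ℝ) 1 → u ≤ v →
      f (α * u) / f α * v ≤ f (α * v) / f α * u := by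
    rintro ⟨α, hα0, hα1⟩ u v hu hv huv
    have hfα : 0 < f α := hfpos α hα0
    have hαu : 0 < α * u := mul_pos hα0 hu.1
    have hαv : 0 < α * v := mul_pos hα0 hv.1
    have hslope := slope_mono_aux f hconv hf0 hαu
      (mul_le_mul_of_nonneg_left huv hα0.le)
    rw [div_le_div_iff₀ hαu hαv] at hslope
    show f (α * u) / f α * v ≤ f (α * v) / f α * u
    rw [div_mul_eq_mul_div, div_mul_eq_mul_div, div_le_div_iff₀ hfα hfα]
    nlinarith [mul_le_mul_of_nonneg_right hslope hfα.le]
  have hterm_nonneg : ∀ (u : ℝ), u ∈ Set.Ioo (0:ℝ) 1 → ∀ α : Set.Ioo (0:ℝ) 1,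
      0 ≤ f (α * u) / f α := by
    rintro u hu ⟨α, hα0, hα1⟩
    exact div_nonneg (hnonneg _ (mul_nonneg hα0.le hu.1.le)) (hnonneg _ hα0.le)
  have hterm_le : ∀ (u : ℝ), u ∈ Set.Ioo (0:ℝ) 1 → ∀ α : Set.Ioo (0:ℝ) 1,
      f (α * u) / f α ≤ u := by
    rintro u hu ⟨α, hα0, hα1⟩
    have hfα : 0 < f α := hfpos α hα0
    have hαu : 0 < α * u := mul_pos hα0 hu.1
    have hslope := slope_mono_aux f hconv hf0 hαu
      (by nlinarith [hu.2, hα0] : α * u ≤ α)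
    rw [div_le_div_iff₀ hαu hα0] at hslope
    show f (α * u) / f α ≤ u
    rw [div_le_iff₀ hfα]
    nlinarith
  constructor
  · intro u v hu hv huv
    have hbdd : BddBelow (Set.range fun α : Set.Ioo (0:ℝ) 1 => f (α * u) / f α) :=
      ⟨0, by rintro x ⟨α, rfl⟩; exact hterm_nonneg u hu α⟩
    rw [div_le_div_iff₀ hu.1 hv.1]
    rw [← div_le_iff₀ hu.1]
    apply le_ciInf
    intro α
    rw [div_le_iff₀ hu.1]
    calc fm f u * v ≤ (f (α * u) / f α) * v :=
          mul_le_mul_of_nonneg_right (ciInf_le hbdd α) hv.1.le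
      _ ≤ f (α * v) / f α * u := key α u v hu hv huv
  · intro u v hu hv huv
    have hbddv : BddAbove (Set.range fun α : Set.Ioo (0:ℝ) 1 => f (α * v) / f α) :=
      ⟨v, by rintro x ⟨α, rfl⟩; exact hterm_le v hv α⟩
    rw [div_le_div_iff₀ hu.1 hv.1]
    rw [← le_div_iff₀ hv.1]
    apply ciSup_le
    intro α
    rw [le_div_iff₀ hv.1]
    calc f (α * u) / f α * v ≤ f (α * v) / f α * u := key α u v hu hv huv
      _ ≤ fM f v * u := mul_le_mul_of_nonneg_right (le_ciSup hbddv α) hu.1.le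
end

section
/- Let f : (0,∞) → (0,∞) be measurable with ∫_1^∞ ds/f(s) < ∞, and suppose there exist 0 < γ₁ ≤ γ₂ with γ₁ f(α) f(u) ≤ f(αu) ≤ γ₂ f(α) f(u) for all 0 < α < 1 and u > 0. Define F(z) = ∫_z^∞ dw/f(w). Then (F(1)/γ₂)·(z/f(z)) ≤ F(z) ≤ (F(1)/γ₁)·(z/f(z)) for all z ∈ (0,1); in particular F(z) is comparable to z/f(z). -/
open Set MeasureTheory

theorem stmt_17 (f : ℝ → ℝ) (γ1 γ2 : ℝ) (hγ1 : 0 < γ1) (hγ12 : γ1 ≤ γ2)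
    (hfpos : ∀ s, 0 < s → 0 < f s)
    (hmeas : Measurable f)
    (hint : ∀ z : ℝ, 0 < z → IntegrableOn (fun w => 1 / f w) (Set.Ioi z))
    (hquasi : ∀ α u : ℝ, 0 < α → α < 1 → 0 < u →
      γ1 * (f α * f u) ≤ f (α * u) ∧ f (α * u) ≤ γ2 * (f α * f u))
    (F : ℝ → ℝ) (hF : ∀ z, F z = ∫ w in Set.Ioi z, 1 / f w)
    (z : ℝ) (hz : z ∈ Set.Ioo (0:ℝ) 1) :
    F 1 / γ2 * (z / f z) ≤ F z ∧ F z ≤ F 1 / γ1 * (z / f z) := by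
  obtain ⟨hz0, hz1⟩ := hz
  have hγ2 : (0:ℝ) < γ2 := lt_of_lt_of_le hγ1 hγ12
  have hfz : 0 < f z := hfpos z hz0
  -- substitution: F z = z * ∫_{Ioi 1} 1/f(z s) ds
  have hsub : (∫ s in Set.Ioi (1:ℝ), 1 / f (z * s)) = z⁻¹ * F z := by
    rw [hF z]
    simpa [smul_eq_mul] using integral_comp_mul_left_Ioi (fun w => 1 / f w) 1 hz0
  -- integrability of s ↦ 1/f(z s) on Ioi 1
  have hintz : IntegrableOn (fun s => 1 / f (z * s)) (Set.Ioi 1) := by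
    have := (integrableOn_Ioi_comp_mul_left_iff (fun w => 1 / f w) 1 hz0).mpr
      (by simpa [mul_one] using hint z hz0)
    simpa using this
  -- integrability of comparison functions
  have hint1 : IntegrableOn (fun s => 1 / f s) (Set.Ioi 1) := hint 1 one_pos
  have hintc : ∀ c : ℝ, IntegrableOn (fun s => (1/c) * (1 / f s)) (Set.Ioi 1) :=
    fun c => hint1.const_mul _
  -- pointwise bounds
  have hlow : ∀ s ∈ Set.Ioi (1:ℝ), (1/(γ2 * f z)) * (1 / f s) ≤ 1 / f (z * s) := by
    intro s hs
    have hs0 : (0:ℝ) < s := lt_trans one_pos hs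
    have hfs := hfpos s hs0
    have hq := (hquasi z s hz0 hz1 hs0).2
    have hfz_s := hfpos (z * s) (mul_pos hz0 hs0)
    rw [div_mul_div_comm, one_mul]
    apply one_div_le_one_div_of_le hfz_s
    calc f (z * s) ≤ γ2 * (f z * f s) := hq
      _ = γ2 * f z * f s := by ring
  have hhigh : ∀ s ∈ Set.Ioi (1:ℝ), 1 / f (z * s) ≤ (1/(γ1 * f z)) * (1 / f s) := by
    intro s hs
    have hs0 : (0:ℝ) < s := lt_trans one_pos hs
    have hfs := hfpos s hs0
    have hq := (hquasi z s hz0 hz1 hs0).1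
    have hpos : 0 < γ1 * (f z * f s) := mul_pos hγ1 (mul_pos hfz hfs)
    rw [div_mul_div_comm, one_mul, mul_assoc]
    exact one_div_le_one_div_of_le hpos hq
  -- integrate the bounds
  have hIlow : (1/(γ2 * f z)) * F 1 ≤ z⁻¹ * F z := by
    rw [← hsub, hF 1]
    rw [show (1/(γ2 * f z)) * ∫ w in Set.Ioi (1:ℝ), 1 / f w
        = ∫ s in Set.Ioi (1:ℝ), (1/(γ2 * f z)) * (1 / f s) from
      (MeasureTheory.integral_const_mul _ _).symm]
    exact setIntegral_mono_on (hintc _) hintz measurableSet_Ioi hlow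
  have hIhigh : z⁻¹ * F z ≤ (1/(γ1 * f z)) * F 1 := by
    rw [← hsub, hF 1]
    rw [show (1/(γ1 * f z)) * ∫ w in Set.Ioi (1:ℝ), 1 / f w
        = ∫ s in Set.Ioi (1:ℝ), (1/(γ1 * f z)) * (1 / f s) from
      (MeasureTheory.integral_const_mul _ _).symm]
    exact setIntegral_mono_on hintz (hintc _) measurableSet_Ioi hhigh
  constructor
  · have := mul_le_mul_of_nonneg_left hIlow hz0.le
    calc F 1 / γ2 * (z / f z) = z * ((1/(γ2 * f z)) * F 1) := by field_simp
      _ ≤ z * (z⁻¹ * F z) := this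
      _ = F z := by field_simp
  · have := mul_le_mul_of_nonneg_left hIhigh hz0.le
    calc F z = z * (z⁻¹ * F z) := by field_simp
      _ ≤ z * ((1/(γ1 * f z)) * F 1) := this
      _ = F 1 / γ1 * (z / f z) := by field_simp
end
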